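/- Let n ≥ 1 be an integer and let x ∈ X. Then the Douglas–Rachford operator T satisfies ‖T^n x − P_{Fix T} x‖ ≤ c_F^n ‖x − P_{Fix T} x‖ ≤ c_F^n ‖x‖, where c_F is the cosine of the Friedrichs angle between U and V. -/

import Mathlib

noncomputable section

variable {X : Type*} [NormedAddCommGroup X] [InnerProductSpace ℝ X] [CompleteSpace X]

/-- The orthogonal projection onto a closed subspace `W`, as an operator on `X`. -/
noncomputable def proj (W : Submodule ℝ X) [Submodule.HasOrthogonalProjection W] : X →L[ℝ] X :=
  W.subtypeL.comp (Submodule.orthogonalProjectionOnto W)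

instance infHOP (U V : Submodule ℝ X) [CompleteSpace U] [CompleteSpace V] :
    Submodule.HasOrthogonalProjection (U ⊓ V) := by
  have hU : IsClosed (U : Set X) := (completeSpace_coe_iff_isComplete.mp ‹_›).isClosed
  have hV : IsClosed (V : Set X) := (completeSpace_coe_iff_isComplete.mp ‹_›).isClosed
  have : CompleteSpace (U ⊓ V : Submodule ℝ X) := (hU.inter hV).completeSpace_coe
  infer_instance

/-- The fixed point set `Fix T = {x | T x = x}` of a continuous linear operator `T`,
as a submodule of `X`. -/
noncomputable def fixedSpace (T : X →L[ℝ] X) : Submodule ℝ X := LinearMap.ker ((T - 1 : X →L[ℝ] X) : X →ₗ[ℝ] X)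

instance fixedSpaceHOP (T : X →L[ℝ] X) : Submodule.HasOrthogonalProjection (fixedSpace T) := by
  have h : IsClosed ((fixedSpace T : Submodule ℝ X) : Set X) := by
    have : ((fixedSpace T : Submodule ℝ X) : Set X) = {x | T x = x} := by
      ext x; simp [fixedSpace, LinearMap.mem_ker, sub_eq_zero]
    rw [this]
    exact isClosed_eq T.continuous continuous_id
  have : CompleteSpace (fixedSpace T) := h.completeSpace_coe
  infer_instance

/-- The reflector `R_W = 2 P_W − Id` associated with `W`. -/
noncomputable def reflector (W : Submodule ℝ X) [Submodule.HasOrthogonalProjection W] : X →L[ℝ] X :=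
  2 • proj W - 1

/-- The Douglas–Rachford operator `T = T_{V,U} = P_V (2 P_U − Id) + Id − P_U`.
(The first argument is `U`, the second is `V`.) -/
noncomputable def drOperator (U V : Submodule ℝ X) [Submodule.HasOrthogonalProjection U]
    [Submodule.HasOrthogonalProjection V] : X →L[ℝ] X :=
  proj V * (2 • proj U - 1) + 1 - proj U

/-- The cosine of the Friedrichs angle between `U` and `V`. -/
noncomputable def friedrichs (U V : Submodule ℝ X) : ℝ :=
  sSup {c : ℝ | ∃ u v : X, u ∈ U ⊓ (U ⊓ V)ᗮ ∧ v ∈ V ⊓ (U ⊓ V)ᗮ ∧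
    ‖u‖ ≤ 1 ∧ ‖v‖ ≤ 1 ∧ c = inner ℝ u v}

/-!
Write `T = P_V P_U + P_{Vᗮ} P_{Uᗮ}`; the two summands have orthogonal ranges, so
`‖T z‖² = ‖P_V P_U z‖² + ‖P_{Vᗮ} P_{Uᗮ} z‖²`. Both `U ⊓ V` and `Uᗮ ⊓ Vᗮ` lie in `Fix T`, so for
`z ⊥ Fix T` we get `P_U z ⊥ U ⊓ V` and `P_{Uᗮ} z ⊥ Uᗮ ⊓ Vᗮ`. The definition of `c_F` gives
`‖P_V u‖ ≤ c_F ‖u‖` for `u ∈ U ⊓ (U ⊓ V)ᗮ`; the dual bound `‖P_{Vᗮ} w‖ ≤ c_F ‖w‖` for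
`w ∈ Uᗮ ⊓ (Uᗮ ⊓ Vᗮ)ᗮ` is checked on the dense subspace `P_{Uᗮ} (V ⊓ (U ⊓ V)ᗮ)` and extended by
continuity. Hence `‖T z‖ ≤ c_F ‖z‖` on `(Fix T)ᗮ`. As `‖T‖ ≤ 1`, `Fix T = Fix T*`, so `T` preserves
`(Fix T)ᗮ`, and iterating on `x - P_{Fix T} x ∈ (Fix T)ᗮ` gives the bound.
-/

open RealInnerProductSpace Submodule

variable {E : Type*} [NormedAddCommGroup E] [InnerProductSpace ℝ E]

lemma proj_eq_starProjection (W : Submodule ℝ E) [W.HasOrthogonalProjection] :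
    proj W = W.starProjection :=
  rfl

section Projection

variable {W : Submodule ℝ E} [W.HasOrthogonalProjection]

lemma inner_self_starProjection (x : E) : ⟪x, W.starProjection x⟫ = ‖W.starProjection x‖ ^ 2 := by
  rw [← real_inner_self_eq_norm_sq, inner_starProjection_left_eq_right,
    starProjection_eq_self_iff.mpr (W.starProjection_apply_mem x)]

lemma starProjection_mem_orthogonal_of_le {M : Submodule ℝ E} (hMW : M ≤ W) {x : E}
    (hx : x ∈ Mᗮ) : W.starProjection x ∈ Mᗮ := fun m hm => by
  rw [← inner_starProjection_left_eq_right, starProjection_eq_self_iff.mpr (hMW hm)]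
  exact hx m hm

end Projection

section Friedrichs

variable (U V : Submodule ℝ E)

lemma friedrichs_comm : friedrichs U V = friedrichs V U := by
  simp only [friedrichs, inf_comm V U]
  congr 1
  ext c
  exact ⟨fun ⟨u, v, hu, hv, hu₁, hv₁, h⟩ => ⟨v, u, hv, hu, hv₁, hu₁, h.trans (real_inner_comm _ _)⟩,
    fun ⟨v, u, hv, hu, hv₁, hu₁, h⟩ => ⟨u, v, hu, hv, hu₁, hv₁, h.trans (real_inner_comm _ _)⟩⟩

lemma inner_le_friedrichs {u v : E} (hu : u ∈ U ⊓ (U ⊓ V)ᗮ) (hv : v ∈ V ⊓ (U ⊓ V)ᗮ)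
    (hu₁ : ‖u‖ ≤ 1) (hv₁ : ‖v‖ ≤ 1) : ⟪u, v⟫ ≤ friedrichs U V := by
  refine le_csSup ⟨1, ?_⟩ ⟨u, v, hu, hv, hu₁, hv₁, rfl⟩
  rintro _ ⟨u, v, -, -, hu₁, hv₁, rfl⟩
  exact (real_inner_le_norm u v).trans (mul_le_one₀ hu₁ (norm_nonneg v) hv₁)

lemma friedrichs_nonneg : 0 ≤ friedrichs U V := by
  simpa using inner_le_friedrichs U V (zero_mem _) (zero_mem _) (by simp) (by simp)

lemma inner_le_friedrichs_mul {u v : E} (hu : u ∈ U ⊓ (U ⊓ V)ᗮ) (hv : v ∈ V ⊓ (U ⊓ V)ᗮ) :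
    ⟪u, v⟫ ≤ friedrichs U V * (‖u‖ * ‖v‖) := by
  rcases eq_or_ne u 0 with rfl | hu₀
  · simp
  rcases eq_or_ne v 0 with rfl | hv₀
  · simp
  have h := inner_le_friedrichs U V (smul_mem _ ‖u‖⁻¹ hu) (smul_mem _ ‖v‖⁻¹ hv)
    (by simp [norm_smul, hu₀]) (by simp [norm_smul, hv₀])
  rw [real_inner_smul_left, real_inner_smul_right, ← mul_assoc, ← mul_inv,
    inv_mul_le_iff₀ (by positivity)] at h
  exact h.trans_eq (mul_comm _ _)

lemma norm_starProjection_le_friedrichs_mul [V.HasOrthogonalProjection] {u : E}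
    (hu : u ∈ U ⊓ (U ⊓ V)ᗮ) : ‖V.starProjection u‖ ≤ friedrichs U V * ‖u‖ := by
  set w := V.starProjection u
  have hw : w ∈ V ⊓ (U ⊓ V)ᗮ :=
    ⟨V.starProjection_apply_mem u, starProjection_mem_orthogonal_of_le inf_le_right hu.2⟩
  have key : ‖w‖ * ‖w‖ ≤ friedrichs U V * ‖u‖ * ‖w‖ := calc
    ‖w‖ * ‖w‖ = ⟪u, w⟫ := by rw [inner_self_starProjection, sq]
    _ ≤ friedrichs U V * (‖u‖ * ‖w‖) := inner_le_friedrichs_mul U V hu hw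
    _ = friedrichs U V * ‖u‖ * ‖w‖ := by ring
  rcases (norm_nonneg w).eq_or_lt with h | h
  · rw [← h]
    exact mul_nonneg (friedrichs_nonneg U V) (norm_nonneg u)
  · exact le_of_mul_le_mul_right key h

lemma norm_starProjection_le_friedrichs_mul' [U.HasOrthogonalProjection] {v : E}
    (hv : v ∈ V ⊓ (U ⊓ V)ᗮ) : ‖U.starProjection v‖ ≤ friedrichs U V * ‖v‖ := by
  rw [friedrichs_comm]
  exact norm_starProjection_le_friedrichs_mul V U (by rwa [inf_comm V U])

end Friedrichs

section Duality

variable (U V : Submodule ℝ E) [U.HasOrthogonalProjection]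

lemma norm_starProjection_orthogonal_le_of_mem_map [V.HasOrthogonalProjection] {v : E}
    (hv : v ∈ V ⊓ (U ⊓ V)ᗮ) :
    ‖Vᗮ.starProjection (Uᗮ.starProjection v)‖ ≤ friedrichs U V * ‖Uᗮ.starProjection v‖ := by
  set c := friedrichs U V
  set s := Uᗮ.starProjection v
  rcases eq_or_ne v 0 with rfl | hv₀
  · simp [s]
  have hs : ‖s‖ ^ 2 ≤ ‖V.starProjection s‖ * ‖v‖ := calc
    ‖s‖ ^ 2 = ⟪V.starProjection s, v⟫ := by
      rw [inner_starProjection_left_eq_right, starProjection_eq_self_iff.mpr hv.1,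
        real_inner_comm, inner_self_starProjection]
    _ ≤ ‖V.starProjection s‖ * ‖v‖ := real_inner_le_norm _ _
  have hsv : (1 - c ^ 2) * ‖v‖ ^ 2 ≤ ‖s‖ ^ 2 := by
    have hU := pow_le_pow_left₀ (norm_nonneg _) (norm_starProjection_le_friedrichs_mul' U V hv) 2
    nlinarith [norm_sq_eq_add_norm_sq_starProjection v U]
  have hVs : (1 - c ^ 2) * ‖s‖ ^ 2 * ‖v‖ ^ 2 ≤ ‖V.starProjection s‖ ^ 2 * ‖v‖ ^ 2 := calc
    _ = ‖s‖ ^ 2 * ((1 - c ^ 2) * ‖v‖ ^ 2) := by ring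
    _ ≤ (‖s‖ ^ 2) ^ 2 := by rw [sq (‖s‖ ^ 2)]; exact mul_le_mul_of_nonneg_left hsv (sq_nonneg _)
    _ ≤ (‖V.starProjection s‖ * ‖v‖) ^ 2 := pow_le_pow_left₀ (sq_nonneg _) hs 2
    _ = ‖V.starProjection s‖ ^ 2 * ‖v‖ ^ 2 := by ring
  replace hVs := le_of_mul_le_mul_right hVs (by positivity)
  refine le_of_pow_le_pow_left₀ two_ne_zero (mul_nonneg (friedrichs_nonneg U V) (norm_nonneg s)) ?_
  nlinarith [norm_sq_eq_add_norm_sq_starProjection s V]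

variable [CompleteSpace E] [(U ⊓ V).HasOrthogonalProjection]

lemma orthogonal_inf_le_topologicalClosure_map :
    Uᗮ ⊓ (Uᗮ ⊓ Vᗮ)ᗮ ≤
      ((V ⊓ (U ⊓ V)ᗮ).map (Uᗮ.starProjection : E →ₗ[ℝ] E)).topologicalClosure := by
  rw [← orthogonal_orthogonal_eq_closure]
  rintro w ⟨hwU, hwN⟩ x hx
  have hxN : Uᗮ.starProjection x ∈ Uᗮ ⊓ Vᗮ := by
    refine ⟨Uᗮ.starProjection_apply_mem x, fun v hv => ?_⟩
    have hv' : (U ⊓ V)ᗮ.starProjection v ∈ V ⊓ (U ⊓ V)ᗮ :=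
      ⟨by
        rw [starProjection_orthogonal_val]
        exact sub_mem hv (inf_le_right (a := U) (starProjection_apply_mem _ v)),
        starProjection_apply_mem _ v⟩
    rw [← inner_starProjection_left_eq_right, ← starProjection_comp_starProjection_of_le
      (orthogonal_le (inf_le_left : U ⊓ V ≤ U)), ContinuousLinearMap.comp_apply]
    exact hx _ ⟨_, hv', rfl⟩
  rw [← starProjection_eq_self_iff.mpr hwU, ← inner_starProjection_left_eq_right]
  exact hwN _ hxN

lemma norm_starProjection_orthogonal_le_friedrichs_mul [V.HasOrthogonalProjection] {w : E}
    (hw : w ∈ Uᗮ ⊓ (Uᗮ ⊓ Vᗮ)ᗮ) :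
    ‖Vᗮ.starProjection w‖ ≤ friedrichs U V * ‖w‖ := by
  have hclosed : IsClosed {x : E | ‖Vᗮ.starProjection x‖ ≤ friedrichs U V * ‖x‖} :=
    isClosed_le (by fun_prop) (by fun_prop)
  have hw := orthogonal_inf_le_topologicalClosure_map U V hw
  rw [← SetLike.mem_coe, topologicalClosure_coe] at hw
  refine closure_minimal ?_ hclosed hw
  rintro _ ⟨v, hv, rfl⟩
  exact norm_starProjection_orthogonal_le_of_mem_map U V hv

end Duality

lemma norm_pow_apply_le_of_mapsTo {R F : Type*} [Semiring R] [SeminormedAddCommGroup F]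
    [Module R F] (T : F →L[R] F) {K : Set F} (hK : Set.MapsTo T K K) {c : ℝ} (hc : 0 ≤ c)
    (hT : ∀ z ∈ K, ‖T z‖ ≤ c * ‖z‖) (n : ℕ) : ∀ z ∈ K, ‖(T ^ n) z‖ ≤ c ^ n * ‖z‖ := by
  induction n with
  | zero => simp
  | succ n ih =>
    intro z hz
    calc ‖(T ^ (n + 1)) z‖ = ‖(T ^ n) (T z)‖ := by rw [pow_succ, mul_apply_eq_comp]
      _ ≤ c ^ n * ‖T z‖ := ih _ (hK hz)
      _ ≤ c ^ n * (c * ‖z‖) := mul_le_mul_of_nonneg_left (hT z hz) (pow_nonneg hc n)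
      _ = c ^ (n + 1) * ‖z‖ := by ring

section FixedSpace

lemma mem_fixedSpace_iff {T : E →L[ℝ] E} {x : E} : x ∈ fixedSpace T ↔ T x = x := by
  simp [fixedSpace, sub_eq_zero]

lemma pow_apply_of_mem_fixedSpace {T : E →L[ℝ] E} {x : E} (hx : x ∈ fixedSpace T) (n : ℕ) :
    (T ^ n) x = x := by
  induction n with
  | zero => rfl
  | succ n ih => rw [pow_succ, mul_apply_eq_comp, mem_fixedSpace_iff.mp hx, ih]

variable [CompleteSpace E] {T : E →L[ℝ] E}

lemma adjoint_apply_eq_self_of_apply_eq_self (hT : ‖T‖ ≤ 1) {x : E} (hx : T x = x) :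
    ContinuousLinearMap.adjoint T x = x := by
  set y := ContinuousLinearMap.adjoint T x
  have hxy : ⟪y, x⟫ = ‖x‖ ^ 2 := by
    rw [ContinuousLinearMap.adjoint_inner_left, hx, real_inner_self_eq_norm_sq]
  have hy : ‖y‖ ≤ ‖x‖ := by
    refine ((ContinuousLinearMap.adjoint T).le_opNorm x).trans ?_
    rw [LinearIsometryEquiv.norm_map]
    exact mul_le_of_le_one_left (norm_nonneg x) hT
  have h : ‖y - x‖ ^ 2 ≤ 0 := by
    rw [norm_sub_sq_real, hxy]
    nlinarith [norm_nonneg y, norm_nonneg x]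
  simpa [sub_eq_zero] using h

lemma apply_mem_orthogonal_fixedSpace (hT : ‖T‖ ≤ 1) {z : E} (hz : z ∈ (fixedSpace T)ᗮ) :
    T z ∈ (fixedSpace T)ᗮ := fun f hf => by
  rw [← ContinuousLinearMap.adjoint_inner_left,
    adjoint_apply_eq_self_of_apply_eq_self hT (mem_fixedSpace_iff.mp hf)]
  exact hz f hf

end FixedSpace

section DouglasRachford

variable (U V : Submodule ℝ E) [U.HasOrthogonalProjection] [V.HasOrthogonalProjection]

lemma drOperator_apply (x : E) :
    drOperator U V x =
      V.starProjection (U.starProjection x) + Vᗮ.starProjection (Uᗮ.starProjection x) := by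
  simp only [drOperator, proj_eq_starProjection, starProjection_orthogonal_val, map_sub,
    sub_apply, add_apply, mul_apply_eq_comp, one_apply_eq_self, two_smul, map_add]
  abel

lemma inf_le_fixedSpace_drOperator : U ⊓ V ≤ fixedSpace (drOperator U V) := by
  rintro m ⟨hmU, hmV⟩
  rw [mem_fixedSpace_iff, drOperator_apply, starProjection_eq_self_iff.mpr hmU,
    starProjection_eq_self_iff.mpr hmV, starProjection_orthogonal_apply_eq_zero hmU, map_zero,
    add_zero]

lemma orthogonal_inf_le_fixedSpace_drOperator : Uᗮ ⊓ Vᗮ ≤ fixedSpace (drOperator U V) := by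
  rintro m ⟨hmU, hmV⟩
  rw [mem_fixedSpace_iff, drOperator_apply, (starProjection_apply_eq_zero_iff U).mpr hmU, map_zero,
    starProjection_eq_self_iff.mpr hmU, starProjection_eq_self_iff.mpr hmV, zero_add]

lemma norm_drOperator_apply_le {k : ℝ} (hk : 0 ≤ k) {z : E}
    (hU : ‖V.starProjection (U.starProjection z)‖ ≤ k * ‖U.starProjection z‖)
    (hU' : ‖Vᗮ.starProjection (Uᗮ.starProjection z)‖ ≤ k * ‖Uᗮ.starProjection z‖) :
    ‖drOperator U V z‖ ≤ k * ‖z‖ := by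
  have hT : ‖drOperator U V z‖ ^ 2 = ‖V.starProjection (U.starProjection z)‖ ^ 2 +
      ‖Vᗮ.starProjection (Uᗮ.starProjection z)‖ ^ 2 := by
    rw [drOperator_apply, norm_add_sq_real,
      inner_right_of_mem_orthogonal (starProjection_apply_mem _ _) (starProjection_apply_mem Vᗮ _)]
    ring
  refine le_of_pow_le_pow_left₀ two_ne_zero (mul_nonneg hk (norm_nonneg z)) ?_
  calc ‖drOperator U V z‖ ^ 2
      ≤ (k * ‖U.starProjection z‖) ^ 2 + (k * ‖Uᗮ.starProjection z‖) ^ 2 := by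
        rw [hT]
        gcongr
    _ = (k * ‖z‖) ^ 2 := by
        rw [mul_pow, mul_pow, mul_pow, norm_sq_eq_add_norm_sq_starProjection z U]
        ring

lemma norm_drOperator_le_one : ‖drOperator U V‖ ≤ 1 :=
  ContinuousLinearMap.opNorm_le_bound _ zero_le_one fun z =>
    norm_drOperator_apply_le U V zero_le_one
      (by rw [one_mul]; exact norm_starProjection_apply_le V _)
      (by rw [one_mul]; exact norm_starProjection_apply_le Vᗮ _)

lemma norm_drOperator_apply_le_friedrichs_mul [CompleteSpace E] [(U ⊓ V).HasOrthogonalProjection]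
    {z : E} (hz : z ∈ (fixedSpace (drOperator U V))ᗮ) :
    ‖drOperator U V z‖ ≤ friedrichs U V * ‖z‖ :=
  norm_drOperator_apply_le U V (friedrichs_nonneg U V)
    (norm_starProjection_le_friedrichs_mul U V ⟨starProjection_apply_mem U z,
      starProjection_mem_orthogonal_of_le inf_le_left
        (orthogonal_le (inf_le_fixedSpace_drOperator U V) hz)⟩)
    (norm_starProjection_orthogonal_le_friedrichs_mul U V ⟨starProjection_apply_mem Uᗮ z,
      starProjection_mem_orthogonal_of_le inf_le_left
        (orthogonal_le (orthogonal_inf_le_fixedSpace_drOperator U V) hz)⟩)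

end DouglasRachford

theorem norm_drOperator_pow_apply_sub_le_general
    (U V : Submodule ℝ X) [CompleteSpace U] [CompleteSpace V] (n : ℕ) (x : X) :
    ‖((drOperator U V) ^ n) x - proj (fixedSpace (drOperator U V)) x‖ ≤
      friedrichs U V ^ n * ‖x - proj (fixedSpace (drOperator U V)) x‖ ∧
    friedrichs U V ^ n * ‖x - proj (fixedSpace (drOperator U V)) x‖ ≤
      friedrichs U V ^ n * ‖x‖ := by
  set T := drOperator U V
  set F := fixedSpace T
  rw [proj_eq_starProjection]
  have hc : 0 ≤ friedrichs U V := friedrichs_nonneg U V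
  refine ⟨?_, mul_le_mul_of_nonneg_left ?_ (pow_nonneg hc n)⟩
  · calc ‖(T ^ n) x - F.starProjection x‖ = ‖(T ^ n) (x - F.starProjection x)‖ := by
          rw [map_sub, pow_apply_of_mem_fixedSpace (F.starProjection_apply_mem x)]
      _ ≤ friedrichs U V ^ n * ‖x - F.starProjection x‖ :=
          norm_pow_apply_le_of_mapsTo T
            (fun _ => apply_mem_orthogonal_fixedSpace (norm_drOperator_le_one U V)) hc
            (fun _ => norm_drOperator_apply_le_friedrichs_mul U V) n _
            (sub_starProjection_mem_orthogonal x)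
  · simpa only [starProjection_orthogonal_val] using norm_starProjection_apply_le Fᗮ x

/-- `‖T^n x − P_{Fix T} x‖ ≤ c_F^n ‖x − P_{Fix T} x‖ ≤ c_F^n ‖x‖`
for every integer `n ≥ 1` and every `x ∈ X`. -/
theorem norm_drOperator_pow_apply_sub_le
    (U V : Submodule ℝ X) [CompleteSpace U] [CompleteSpace V] (n : ℕ) (hn : 1 ≤ n) (x : X) :
    ‖((drOperator U V) ^ n) x - proj (fixedSpace (drOperator U V)) x‖ ≤
      friedrichs U V ^ n * ‖x - proj (fixedSpace (drOperator U V)) x‖ ∧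
    friedrichs U V ^ n * ‖x - proj (fixedSpace (drOperator U V)) x‖ ≤
      friedrichs U V ^ n * ‖x‖ :=
  norm_drOperator_pow_apply_sub_le_general U V n x
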